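/- arXiv:2002.10045 — 5 statements merged into one kernel-verified Lean document; each statement's English description precedes it below -/
import Mathlib

section
/- The supremum, over all signaling schemes (S, π), of the seller's revenue under optimal per-signal pricing for the single type θ, namely Σ_{s : φ_θ(s)>0} φ_μ(s)·C(η^s(θ)), is equal to the supremum of Σ_{s∈S} φ_s·R(η^s)·C(η^s) over all finite index sets S, weights φ_s ≥ 0 and posteriors η^s ∈ Δ_n satisfying Σ_{s∈S} φ_s·η^s = θ (i.e., it equals the value of the concave closure of f(η) = R(η)·C(η) at the point θ). -/
open Finset
open scoped Classical

noncomputable section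

/-- The probability simplex in `ℝ^n`. -/
def simplex (n : ℕ) : Set (Fin n → ℝ) :=
  {η | (∀ ω, 0 ≤ η ω) ∧ ∑ ω, η ω = 1}

variable {n : ℕ} {A : Type*} [Fintype A] [Nonempty A]

/-- `u*(ω) = max_{a ∈ A} u(ω, a)`. -/
def uStar (u : Fin n → A → ℝ) (ω : Fin n) : ℝ :=
  Finset.univ.sup' Finset.univ_nonempty (u ω)

/-- The cost of uncertainty `C(η)`. -/
def Cost (u : Fin n → A → ℝ) (η : Fin n → ℝ) : ℝ :=
  ∑ ω, η ω * uStar u ω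
    - Finset.univ.sup' Finset.univ_nonempty (fun a => ∑ ω, η ω * u ω a)

/-- The likelihood ratio `R(η) = Σ_ω μ_ω η_ω / θ_ω`. -/
def Ratio (μ θ η : Fin n → ℝ) : ℝ := ∑ ω, μ ω * η ω / θ ω

/-- Values of the seller's revenue under optimal per-signal pricing, over all
signaling schemes `(S, π)`. -/
def RevenueSet (u : Fin n → A → ℝ) (μ θ : Fin n → ℝ) : Set ℝ :=
  {v | ∃ (m : ℕ) (π : Fin n → Fin m → ℝ),
    (∀ ω s, 0 ≤ π ω s) ∧ (∀ ω s, π ω s ≤ 1) ∧ (∀ ω, ∑ s, π ω s = 1) ∧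
    v = ∑ s ∈ Finset.univ.filter (fun s => 0 < ∑ ω, θ ω * π ω s),
          (∑ ω, μ ω * π ω s) *
            Cost u (fun ω => θ ω * π ω s / ∑ ω', θ ω' * π ω' s)}

/-- Values of `Σ_s φ_s · R(η^s) · C(η^s)` over all finite families of weights
`φ_s ≥ 0` and posteriors `η^s ∈ Δ_n` with `Σ_s φ_s · η^s = θ`. -/
def ConcaveSet (u : Fin n → A → ℝ) (μ θ : Fin n → ℝ) : Set ℝ :=
  {v | ∃ (m : ℕ) (φ : Fin m → ℝ) (η : Fin m → Fin n → ℝ),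
    (∀ s, 0 ≤ φ s) ∧ (∀ s, η s ∈ simplex n) ∧
    (∀ ω, ∑ s, φ s * η s ω = θ ω) ∧
    v = ∑ s, φ s * Ratio μ θ (η s) * Cost u (η s)}

/-!
A signaling scheme `π` and a Bayes-plausible splitting `θ = Σ_s φ_s η^s` determine each other:
`φ_s = φ_θ(s)`, `η^s = η^s(θ)` one way and `π(ω, s) = φ_s η^s_ω / θ_ω` the other. Under this
correspondence Bayes' rule gives `φ_μ(s) = φ_θ(s) · R(η^s(θ))`, so each revenue is a value
`Σ_s φ_s R(η^s) C(η^s)` and conversely; the two sets of values, hence their suprema, coincide.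
-/

section Signaling

variable {m : ℕ}

/-- `φ_θ(s)` in the paper's notation. -/
def signalProb (θ : Fin n → ℝ) (π : Fin n → Fin m → ℝ) (s : Fin m) : ℝ :=
  ∑ ω, θ ω * π ω s

/-- `η^s(θ)`; it is the zero vector (not a posterior) when `φ_θ(s) = 0`. -/
def posterior (θ : Fin n → ℝ) (π : Fin n → Fin m → ℝ) (s : Fin m) : Fin n → ℝ :=
  fun ω => θ ω * π ω s / signalProb θ π s

/-- The splitting of `θ` induced by a scheme; signals of probability zero get the
posterior `θ` so that every posterior lies in the simplex. -/
def inducedPosterior (θ : Fin n → ℝ) (π : Fin n → Fin m → ℝ) (s : Fin m) : Fin n → ℝ :=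
  if 0 < signalProb θ π s then posterior θ π s else θ

def schemeOfSplitting (θ : Fin n → ℝ) (φ : Fin m → ℝ) (η : Fin m → Fin n → ℝ) :
    Fin n → Fin m → ℝ :=
  fun ω s => φ s * η s ω / θ ω

variable {θ : Fin n → ℝ} {π : Fin n → Fin m → ℝ}

lemma signalProb_nonneg (hθ : ∀ ω, 0 ≤ θ ω) (hπ : ∀ ω s, 0 ≤ π ω s) (s : Fin m) :
    0 ≤ signalProb θ π s :=
  sum_nonneg fun ω _ => mul_nonneg (hθ ω) (hπ ω s)

lemma mul_eq_zero_of_signalProb_eq_zero (hθ : ∀ ω, 0 ≤ θ ω) (hπ : ∀ ω s, 0 ≤ π ω s)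
    {s : Fin m} (hs : signalProb θ π s = 0) (ω : Fin n) : θ ω * π ω s = 0 :=
  (sum_eq_zero_iff_of_nonneg fun ω _ => mul_nonneg (hθ ω) (hπ ω s)).1 hs ω (mem_univ ω)

lemma signalProb_mul_posterior {s : Fin m} (hs : signalProb θ π s ≠ 0) (ω : Fin n) :
    signalProb θ π s * posterior θ π s ω = θ ω * π ω s :=
  mul_div_cancel₀ _ hs

lemma posterior_mem_simplex (hθ : ∀ ω, 0 ≤ θ ω) (hπ : ∀ ω s, 0 ≤ π ω s) {s : Fin m}
    (hs : 0 < signalProb θ π s) : posterior θ π s ∈ simplex n :=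
  ⟨fun ω => div_nonneg (mul_nonneg (hθ ω) (hπ ω s)) hs.le,
    by simp only [posterior, ← sum_div]; exact div_self hs.ne'⟩

lemma inducedPosterior_mem_simplex (hθ : θ ∈ simplex n) (hπ : ∀ ω s, 0 ≤ π ω s)
    (s : Fin m) : inducedPosterior θ π s ∈ simplex n := by
  unfold inducedPosterior
  split_ifs with hs
  · exact posterior_mem_simplex hθ.1 hπ hs
  · exact hθ

lemma signalProb_mul_inducedPosterior (hθ : ∀ ω, 0 ≤ θ ω) (hπ : ∀ ω s, 0 ≤ π ω s)
    (s : Fin m) (ω : Fin n) :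
    signalProb θ π s * inducedPosterior θ π s ω = θ ω * π ω s := by
  unfold inducedPosterior
  split_ifs with hs
  · exact signalProb_mul_posterior hs.ne' ω
  · have hs0 : signalProb θ π s = 0 := le_antisymm (not_lt.1 hs) (signalProb_nonneg hθ hπ s)
    rw [hs0, zero_mul, mul_eq_zero_of_signalProb_eq_zero hθ hπ hs0]

lemma sum_signalProb_mul_inducedPosterior (hθ : ∀ ω, 0 ≤ θ ω) (hπ : ∀ ω s, 0 ≤ π ω s)
    (hπsum : ∀ ω, ∑ s, π ω s = 1) (ω : Fin n) :
    ∑ s, signalProb θ π s * inducedPosterior θ π s ω = θ ω := by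
  simp only [signalProb_mul_inducedPosterior hθ hπ, ← mul_sum, hπsum, mul_one]

lemma ratio_const_mul (μ θ η : Fin n → ℝ) (c : ℝ) :
    Ratio μ θ (fun ω => c * η ω) = c * Ratio μ θ η := by
  simp only [Ratio, mul_sum]
  exact sum_congr rfl fun ω _ => by ring

lemma ratio_self_mul (μ : Fin n → ℝ) (hθ : ∀ ω, θ ω ≠ 0) (x : Fin n → ℝ) :
    Ratio μ θ (fun ω => θ ω * x ω) = ∑ ω, μ ω * x ω :=
  sum_congr rfl fun ω _ => by field_simp [hθ ω]

/-- Bayes' rule in the form `φ_μ(s) = φ_θ(s) · R(η^s(θ))`. -/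
lemma signalProb_mul_ratio_posterior (μ : Fin n → ℝ) (hθ : ∀ ω, θ ω ≠ 0) {s : Fin m}
    (hs : signalProb θ π s ≠ 0) :
    signalProb θ π s * Ratio μ θ (posterior θ π s) = ∑ ω, μ ω * π ω s := by
  rw [← ratio_const_mul]
  simp only [signalProb_mul_posterior hs]
  exact ratio_self_mul μ hθ _

lemma sum_filter_eq_sum_signalProb_mul_ratio (μ : Fin n → ℝ) (hθ : ∀ ω, 0 < θ ω)
    (hπ : ∀ ω s, 0 ≤ π ω s) (g : (Fin n → ℝ) → ℝ) :
    ∑ s ∈ univ.filter (fun s => 0 < signalProb θ π s), (∑ ω, μ ω * π ω s) * g (posterior θ π s)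
      = ∑ s, signalProb θ π s * Ratio μ θ (inducedPosterior θ π s)
          * g (inducedPosterior θ π s) := by
  rw [sum_filter]
  refine sum_congr rfl fun s _ => ?_
  unfold inducedPosterior
  split_ifs with hs
  · rw [signalProb_mul_ratio_posterior μ (fun ω => (hθ ω).ne') hs.ne']
  · rw [le_antisymm (not_lt.1 hs) (signalProb_nonneg (fun ω => (hθ ω).le) hπ s),
      zero_mul, zero_mul]

variable {φ : Fin m → ℝ} {η : Fin m → Fin n → ℝ}

lemma schemeOfSplitting_nonneg (hθ : ∀ ω, 0 < θ ω) (hφ : ∀ s, 0 ≤ φ s)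
    (hη : ∀ s, η s ∈ simplex n) (ω : Fin n) (s : Fin m) :
    0 ≤ schemeOfSplitting θ φ η ω s :=
  div_nonneg (mul_nonneg (hφ s) ((hη s).1 ω)) (hθ ω).le

lemma sum_schemeOfSplitting (hθ : ∀ ω, θ ω ≠ 0) (hsplit : ∀ ω, ∑ s, φ s * η s ω = θ ω)
    (ω : Fin n) : ∑ s, schemeOfSplitting θ φ η ω s = 1 := by
  simp only [schemeOfSplitting, ← sum_div, hsplit ω, div_self (hθ ω)]

lemma schemeOfSplitting_le_one (hθ : ∀ ω, 0 < θ ω) (hφ : ∀ s, 0 ≤ φ s)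
    (hη : ∀ s, η s ∈ simplex n) (hsplit : ∀ ω, ∑ s, φ s * η s ω = θ ω)
    (ω : Fin n) (s : Fin m) : schemeOfSplitting θ φ η ω s ≤ 1 := by
  rw [← sum_schemeOfSplitting (fun ω => (hθ ω).ne') hsplit ω]
  exact single_le_sum (fun s _ => schemeOfSplitting_nonneg hθ hφ hη ω s) (mem_univ s)

lemma signalProb_schemeOfSplitting (hθ : ∀ ω, θ ω ≠ 0) (hη : ∀ s, η s ∈ simplex n)
    (s : Fin m) : signalProb θ (schemeOfSplitting θ φ η) s = φ s := by
  have hterm : ∀ ω, θ ω * schemeOfSplitting θ φ η ω s = φ s * η s ω := fun ω =>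
    mul_div_cancel₀ _ (hθ ω)
  simp only [signalProb, hterm, ← mul_sum, (hη s).2, mul_one]

lemma posterior_schemeOfSplitting (hθ : ∀ ω, θ ω ≠ 0) (hη : ∀ s, η s ∈ simplex n)
    {s : Fin m} (hs : φ s ≠ 0) : posterior θ (schemeOfSplitting θ φ η) s = η s := by
  funext ω
  rw [posterior, signalProb_schemeOfSplitting hθ hη, schemeOfSplitting]
  field_simp [hθ ω]

lemma inducedPosterior_schemeOfSplitting (hθ : ∀ ω, θ ω ≠ 0) (hη : ∀ s, η s ∈ simplex n)
    {s : Fin m} (hs : 0 < φ s) : inducedPosterior θ (schemeOfSplitting θ φ η) s = η s := by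
  rw [inducedPosterior, signalProb_schemeOfSplitting hθ hη, if_pos hs,
    posterior_schemeOfSplitting hθ hη hs.ne']

end Signaling

lemma revenueSet_subset_concaveSet (u : Fin n → A → ℝ) (μ : Fin n → ℝ) {θ : Fin n → ℝ}
    (hθ : θ ∈ simplex n) (hθpos : ∀ ω, 0 < θ ω) : RevenueSet u μ θ ⊆ ConcaveSet u μ θ := by
  rintro v ⟨m, π, hπ, -, hπsum, rfl⟩
  have hθ0 : ∀ ω, 0 ≤ θ ω := fun ω => (hθpos ω).le
  exact ⟨m, signalProb θ π, inducedPosterior θ π, signalProb_nonneg hθ0 hπ,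
    inducedPosterior_mem_simplex hθ hπ, sum_signalProb_mul_inducedPosterior hθ0 hπ hπsum,
    sum_filter_eq_sum_signalProb_mul_ratio μ hθpos hπ (Cost u)⟩

lemma concaveSet_subset_revenueSet (u : Fin n → A → ℝ) (μ : Fin n → ℝ) {θ : Fin n → ℝ}
    (hθpos : ∀ ω, 0 < θ ω) : ConcaveSet u μ θ ⊆ RevenueSet u μ θ := by
  rintro v ⟨m, φ, η, hφ, hη, hsplit, rfl⟩
  have hθ0 : ∀ ω, θ ω ≠ 0 := fun ω => (hθpos ω).ne'
  have hπ := schemeOfSplitting_nonneg hθpos hφ hη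
  refine ⟨m, schemeOfSplitting θ φ η, hπ, schemeOfSplitting_le_one hθpos hφ hη hsplit,
    sum_schemeOfSplitting hθ0 hsplit, ?_⟩
  refine ((sum_filter_eq_sum_signalProb_mul_ratio μ hθpos hπ (Cost u)).trans
    (sum_congr rfl fun s _ => ?_)).symm
  rw [signalProb_schemeOfSplitting hθ0 hη]
  rcases (hφ s).lt_or_eq with hs | hs
  · rw [inducedPosterior_schemeOfSplitting hθ0 hη hs]
  · simp only [← hs, zero_mul]

theorem stmt0_general (u : Fin n → A → ℝ)
    (μ θ : Fin n → ℝ) (hθ : θ ∈ simplex n)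
    (hθpos : ∀ ω, 0 < θ ω) :
    sSup (RevenueSet u μ θ) = sSup (ConcaveSet u μ θ) := by
  rw [(revenueSet_subset_concaveSet u μ hθ hθpos).antisymm
    (concaveSet_subset_revenueSet u μ hθpos)]

/-- the supremum of the seller's revenue over signaling schemes equals
the supremum of `Σ_s φ_s R(η^s) C(η^s)` over feasible families, i.e. the value of the
concave closure of `f(η) = R(η)·C(η)` at `θ`. -/
theorem stmt0 (hn : 1 ≤ n) (u : Fin n → A → ℝ)
    (μ θ : Fin n → ℝ) (hμ : μ ∈ simplex n) (hθ : θ ∈ simplex n)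
    (hθpos : ∀ ω, 0 < θ ω) :
    sSup (RevenueSet u μ θ) = sSup (ConcaveSet u μ θ) :=
  stmt0_general u μ θ hθ hθpos

end
end

section
/- For every feasible family (S, (φ_s), (η^s)) of the single-type problem (finite S, φ_s ≥ 0, η^s ∈ Δ_n, Σ_{s∈S} φ_s·η^s = θ), there exists a feasible family (S', (φ'_s), (η'^s)) with |S'| ≤ n whose objective value Σ_{s∈S'} φ'_s·R(η'^s)·C(η'^s) is at least Σ_{s∈S} φ_s·R(η^s)·C(η^s). In particular, the supremum of the single-type problem is unchanged when restricted to families with at most n signals. -/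
/-!
Carathéodory's argument, carried along with the objective. For fixed posteriors the objective
`∑ φ_s R(η^s) C(η^s)` is linear in the weights, so `R · C` only attaches a number to each
posterior. If the posteriors with positive weight are linearly dependent, a relation
`∑ c_s η^s = 0` has `∑ c_s = 0` (each `η^s` sums to one), hence negative entries whichever sign
is chosen; choose the sign for which `∑ c_s R(η^s) C(η^s) ≥ 0` and move `φ` along `c` until a
weight vanishes. This keeps `∑ φ_s η^s = θ`, does not lower the objective and shrinks the
support, so one ends with linearly independent posteriors in `ℝ^n`: at most `n` of them.
-/

open Finset
open scoped Classical

noncomputable section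

variable {n : ℕ} {A : Type*} [Fintype A] [Nonempty A]

/-- The set of feasible objective values of the single-type problem,
restricted to families with at most `k` signals. -/
def ConcaveSetLE (u : Fin n → A → ℝ) (μ θ : Fin n → ℝ) (k : ℕ) : Set ℝ :=
  {v | ∃ (m : ℕ) (φ : Fin m → ℝ) (η : Fin m → Fin n → ℝ),
    m ≤ k ∧
    (∀ s, 0 ≤ φ s) ∧ (∀ s, η s ∈ simplex n) ∧
    (∀ ω, ∑ s, φ s * η s ω = θ ω) ∧
    v = ∑ s, φ s * Ratio μ θ (η s) * Cost u (η s)}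

section Reweight

variable {𝕜 E ι : Type*} [Field 𝕜] [LinearOrder 𝕜] [IsStrictOrderedRing 𝕜]
  [AddCommGroup E] [Module 𝕜 E] [Fintype ι]

lemma exists_nonneg_add_mul_eq_zero {ψ c : ι → 𝕜} (hψ : ∀ i, 0 ≤ ψ i) (hc : ∃ i, c i < 0) :
    ∃ t : 𝕜, 0 ≤ t ∧ (∀ i, 0 ≤ ψ i + t * c i) ∧ ∃ i, c i < 0 ∧ ψ i + t * c i = 0 := by
  obtain ⟨i₀, hi₀, hmin⟩ := ({i | c i < 0} : Finset ι).exists_min_image (fun i => ψ i / -c i)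
    (by simpa [Finset.Nonempty] using hc)
  rw [mem_filter_univ] at hi₀
  have hneg : 0 < -c i₀ := neg_pos.2 hi₀
  refine ⟨ψ i₀ / -c i₀, div_nonneg (hψ i₀) hneg.le, fun i => ?_, i₀, hi₀, ?_⟩
  · rcases le_or_gt 0 (c i) with hci | hci
    · nlinarith [mul_nonneg (div_nonneg (hψ i₀) hneg.le) hci, hψ i]
    · have := (le_div_iff₀ (neg_pos.2 hci)).1 (hmin i ((mem_filter_univ i).2 hci))
      linarith
  · rw [div_neg, neg_mul, div_mul_cancel₀ _ hi₀.ne, add_neg_cancel]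

lemma exists_neg_of_sum_mul_eq_zero {c w : ι → 𝕜} (hw : ∀ i, 0 < w i)
    (h : ∑ i, c i * w i = 0) (hc : ∃ i, c i ≠ 0) : ∃ i, c i < 0 := by
  by_contra! hpos
  obtain ⟨i, hi⟩ := hc
  have := (sum_eq_zero_iff_of_nonneg fun j _ => mul_nonneg (hpos j) (hw j).le).1 h i (mem_univ i)
  exact hi ((mul_eq_zero.1 this).resolve_right (hw i).ne')

variable (ℓ : E →ₗ[𝕜] 𝕜) {v : ι → E} (hv : ∀ i, 0 < ℓ (v i)) (g : ι → 𝕜)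
include hv

lemma exists_relation_neg_sum_mul_nonneg {c : ι → 𝕜} (hc : ∑ i, c i • v i = 0)
    (hc₀ : ∃ i, c i ≠ 0) :
    ∃ d : ι → 𝕜, ∑ i, d i • v i = 0 ∧ (∀ i, c i = 0 → d i = 0) ∧
      0 ≤ ∑ i, d i * g i ∧ ∃ i, d i < 0 := by
  have hℓ : ∀ d : ι → 𝕜, ∑ i, d i • v i = 0 → ∑ i, d i * ℓ (v i) = 0 := fun d hd => by
    simpa only [map_sum, map_smul, smul_eq_mul, map_zero] using congrArg ℓ hd
  rcases le_total 0 (∑ i, c i * g i) with hcg | hcg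
  · exact ⟨c, hc, fun _ h => h, hcg,
      exists_neg_of_sum_mul_eq_zero hv (hℓ c hc) hc₀⟩
  · have hc' : ∑ i, (-c i) • v i = 0 := by simp only [neg_smul, sum_neg_distrib, hc, neg_zero]
    refine ⟨fun i => -c i, hc', fun _ h => neg_eq_zero.2 h, ?_,
      exists_neg_of_sum_mul_eq_zero hv (hℓ _ hc') (by simpa using hc₀)⟩
    simpa only [neg_mul, sum_neg_distrib, neg_nonneg] using hcg

lemma exists_reweight_support_ssubset {ψ : ι → 𝕜} (hψ : ∀ i, 0 ≤ ψ i)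
    (hdep : ¬ LinearIndepOn 𝕜 v ({i | ψ i ≠ 0} : Finset ι)) :
    ∃ ψ' : ι → 𝕜, (∀ i, 0 ≤ ψ' i) ∧
      ({i | ψ' i ≠ 0} : Finset ι) ⊂ ({i | ψ i ≠ 0} : Finset ι) ∧
      ∑ i, ψ' i • v i = ∑ i, ψ i • v i ∧ ∑ i, ψ i * g i ≤ ∑ i, ψ' i * g i := by
  obtain ⟨f, hf, i₁, hi₁, hfi₁⟩ := not_linearIndepOn_finset_iff.1 hdep
  obtain ⟨c, hcv, hcψ, hcg, hneg⟩ := exists_relation_neg_sum_mul_nonneg ℓ hv g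
    (c := fun i => if ψ i ≠ 0 then f i else 0)
    (by simpa only [ite_smul, zero_smul, ← sum_filter] using hf)
    ⟨i₁, by simpa [(mem_filter_univ i₁).1 hi₁] using hfi₁⟩
  obtain ⟨t, ht, hψ', i₀, hci₀, hi₀⟩ := exists_nonneg_add_mul_eq_zero hψ hneg
  have hsupp : ∀ i, ψ i = 0 → c i = 0 := fun i hi => hcψ i (by simp [hi])
  refine ⟨fun i => ψ i + t * c i, hψ', ?_, ?_, ?_⟩
  · refine (ssubset_iff_of_subset fun i => ?_).2 ⟨i₀, ?_, ?_⟩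
    · simp only [mem_filter_univ]
      exact mt fun h => by rw [h, hsupp i h, mul_zero, add_zero]
    · simpa only [mem_filter_univ] using mt (hsupp i₀) hci₀.ne
    · simpa only [mem_filter_univ, not_not] using hi₀
  · simp only [add_smul, sum_add_distrib, mul_smul, ← smul_sum, hcv, smul_zero, add_zero]
  · simp only [add_mul, sum_add_distrib, mul_assoc, ← mul_sum]
    nlinarith [mul_nonneg ht hcg]

theorem exists_reweight_linearIndepOn {φ : ι → 𝕜} (hφ : ∀ i, 0 ≤ φ i) :
    ∃ ψ : ι → 𝕜, (∀ i, 0 ≤ ψ i) ∧ LinearIndepOn 𝕜 v ({i | ψ i ≠ 0} : Finset ι) ∧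
      ∑ i, ψ i • v i = ∑ i, φ i • v i ∧ ∑ i, φ i * g i ≤ ∑ i, ψ i * g i := by
  induction h : #({i | φ i ≠ 0} : Finset ι) using Nat.strong_induction_on generalizing φ with
  | _ k ih =>
  by_cases hli : LinearIndepOn 𝕜 v ({i | φ i ≠ 0} : Finset ι)
  · exact ⟨φ, hφ, hli, rfl, le_rfl⟩
  obtain ⟨φ', hφ', hlt, hφ'v, hφ'g⟩ := exists_reweight_support_ssubset ℓ hv g hφ hli
  obtain ⟨ψ, hψ, hψli, hψv, hψg⟩ := ih _ (h ▸ card_lt_card hlt) hφ' rfl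
  exact ⟨ψ, hψ, hψli, hψv.trans hφ'v, hφ'g.trans hψg⟩

theorem exists_reweight_card_support_le_finrank [FiniteDimensional 𝕜 E] {φ : ι → 𝕜}
    (hφ : ∀ i, 0 ≤ φ i) :
    ∃ ψ : ι → 𝕜, (∀ i, 0 ≤ ψ i) ∧ #({i | ψ i ≠ 0} : Finset ι) ≤ Module.finrank 𝕜 E ∧
      ∑ i, ψ i • v i = ∑ i, φ i • v i ∧ ∑ i, φ i * g i ≤ ∑ i, ψ i * g i := by
  obtain ⟨ψ, hψ, hli, hψv, hψg⟩ := exists_reweight_linearIndepOn ℓ hv g hφ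
  exact ⟨ψ, hψ, by simpa using hli.fintype_card_le_finrank, hψv, hψg⟩

end Reweight

lemma Finset.sum_equivFin_symm {ι M : Type*} [Fintype ι] [AddCommMonoid M] (S : Finset ι)
    {f : ι → M} (hf : ∀ i ∉ S, f i = 0) : ∑ k : Fin #S, f (S.equivFin.symm k) = ∑ i, f i := by
  rw [Equiv.sum_comp S.equivFin.symm (fun i => f i), sum_coe_sort,
    sum_subset (subset_univ S) fun i _ hi => hf i hi]

lemma exists_feasible_card_le_objective_le (u : Fin n → A → ℝ) (μ θ : Fin n → ℝ) {m : ℕ}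
    (φ : Fin m → ℝ) (η : Fin m → Fin n → ℝ) (hφ : ∀ s, 0 ≤ φ s) (hη : ∀ s, η s ∈ simplex n)
    (hc : ∀ ω, ∑ s, φ s * η s ω = θ ω) :
    ∃ (m' : ℕ) (φ' : Fin m' → ℝ) (η' : Fin m' → Fin n → ℝ),
      m' ≤ n ∧
      (∀ s, 0 ≤ φ' s) ∧ (∀ s, η' s ∈ simplex n) ∧
      (∀ ω, ∑ s, φ' s * η' s ω = θ ω) ∧
      (∑ s, φ s * Ratio μ θ (η s) * Cost u (η s)) ≤
        (∑ s, φ' s * Ratio μ θ (η' s) * Cost u (η' s)) := by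
  let ℓ : (Fin n → ℝ) →ₗ[ℝ] ℝ := ∑ ω, LinearMap.proj ω
  have hℓ : ∀ s, 0 < ℓ (η s) := fun s => by simp [ℓ, (hη s).2]
  obtain ⟨ψ, hψ, hcard, hψη, hψg⟩ := exists_reweight_card_support_le_finrank ℓ hℓ
    (fun s => Ratio μ θ (η s) * Cost u (η s)) hφ
  set S : Finset (Fin m) := {s | ψ s ≠ 0}
  have hS : ∀ s ∉ S, ψ s = 0 := fun s hs => by simpa [S] using hs
  refine ⟨#S, fun k => ψ (S.equivFin.symm k), fun k => η (S.equivFin.symm k),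
    by simpa using hcard, fun k => hψ _, fun k => hη _, fun ω => ?_, ?_⟩
  · rw [S.sum_equivFin_symm (f := fun s => ψ s * η s ω) fun s hs => by rw [hS s hs, zero_mul],
      ← hc ω]
    simpa using congrFun hψη ω
  · rw [S.sum_equivFin_symm (f := fun s => ψ s * Ratio μ θ (η s) * Cost u (η s))
      fun s hs => by rw [hS s hs, zero_mul, zero_mul]]
    simpa only [mul_assoc] using hψg

theorem stmt3_general (u : Fin n → A → ℝ)
    (μ θ : Fin n → ℝ) :
    (∀ (m : ℕ) (φ : Fin m → ℝ) (η : Fin m → Fin n → ℝ),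
      (∀ s, 0 ≤ φ s) → (∀ s, η s ∈ simplex n) →
      (∀ ω, ∑ s, φ s * η s ω = θ ω) →
      ∃ (m' : ℕ) (φ' : Fin m' → ℝ) (η' : Fin m' → Fin n → ℝ),
        m' ≤ n ∧
        (∀ s, 0 ≤ φ' s) ∧ (∀ s, η' s ∈ simplex n) ∧
        (∀ ω, ∑ s, φ' s * η' s ω = θ ω) ∧
        (∑ s, φ s * Ratio μ θ (η s) * Cost u (η s)) ≤
          (∑ s, φ' s * Ratio μ θ (η' s) * Cost u (η' s))) ∧
    sSup (ConcaveSet u μ θ) = sSup (ConcaveSetLE u μ θ n) := by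
  refine ⟨fun m => exists_feasible_card_le_objective_le u μ θ, ?_⟩
  apply csSup_eq_csSup_of_forall_exists_le
  · rintro x ⟨m, φ, η, hφ, hη, hc, rfl⟩
    obtain ⟨m', φ', η', hm', hφ', hη', hc', hle⟩ :=
      exists_feasible_card_le_objective_le u μ θ φ η hφ hη hc
    exact ⟨_, ⟨m', φ', η', hm', hφ', hη', hc', rfl⟩, hle⟩
  · rintro y ⟨m, φ, η, -, hφ, hη, hc, rfl⟩
    exact ⟨_, ⟨m, φ, η, hφ, hη, hc, rfl⟩, le_rfl⟩

/-- every feasible family of the single-type problem is weakly dominated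
by a feasible family with at most `n` signals; in particular the supremum is unchanged
when restricted to families with at most `n` signals. -/
theorem stmt3 (hn : 1 ≤ n) (u : Fin n → A → ℝ)
    (μ θ : Fin n → ℝ) (hμ : μ ∈ simplex n) (hθ : θ ∈ simplex n)
    (hθpos : ∀ ω, 0 < θ ω) :
    (∀ (m : ℕ) (φ : Fin m → ℝ) (η : Fin m → Fin n → ℝ),
      (∀ s, 0 ≤ φ s) → (∀ s, η s ∈ simplex n) →
      (∀ ω, ∑ s, φ s * η s ω = θ ω) →
      ∃ (m' : ℕ) (φ' : Fin m' → ℝ) (η' : Fin m' → Fin n → ℝ),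
        m' ≤ n ∧
        (∀ s, 0 ≤ φ' s) ∧ (∀ s, η' s ∈ simplex n) ∧
        (∀ ω, ∑ s, φ' s * η' s ω = θ ω) ∧
        (∑ s, φ s * Ratio μ θ (η s) * Cost u (η s)) ≤
          (∑ s, φ' s * Ratio μ θ (η' s) * Cost u (η' s))) ∧
    sSup (ConcaveSet u μ θ) = sSup (ConcaveSetLE u μ θ n) :=
  stmt3_general u μ θ
end
end

section
/- Let φ_s, φ_t > 0 and η^s, η^t ∈ Δ_n, and set φ_v = φ_s + φ_t and η^v = (φ_s·η^s + φ_t·η^t)/φ_v. Then φ_v·R(η^v)·C(η^v) − φ_s·R(η^s)·C(η^s) − φ_t·R(η^t)·C(η^t) ≥ −(φ_s·φ_t/φ_v)·(R(η^s) − R(η^t))·(C(η^s) − C(η^t)). In particular, if (R(η^s) − R(η^t))·(C(η^s) − C(η^t)) < 0 then merging the two signals strictly increases the objective: φ_v·R(η^v)·C(η^v) > φ_s·R(η^s)·C(η^s) + φ_t·R(η^t)·C(η^t); hence no feasible family attaining the supremum of the single-type problem contains two posteriors with positive weights satisfying this negative-slope condition. -/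
open Finset
open scoped Classical

noncomputable section

variable {n : ℕ} {A : Type*} [Fintype A] [Nonempty A]

/-!
Merging: the likelihood ratio `R` is linear and the cost of uncertainty `C` is concave and
positively homogeneous, so at the merged posterior `φ_v R(η^v) = φ_s R(η^s) + φ_t R(η^t)` and
`φ_v C(η^v) ≥ φ_s C(η^s) + φ_t C(η^t)`. Multiplying these (with `R ≥ 0`) gives
`φ_v R(η^v) C(η^v) ≥ (φ_s R_s + φ_t R_t)(φ_s C_s + φ_t C_t) / φ_v`, and the right-hand side is
`φ_s R_s C_s + φ_t R_t C_t − (φ_s φ_t / φ_v)(R_s − R_t)(C_s − C_t)`.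

Optimality: replacing the pair `s, t` of a feasible family by the single merged signal keeps it
feasible, so under the negative-slope condition it beats a supposed maximiser. The supremum is
finite because `C` is bounded on the simplex and every feasible family has
`Σ_s φ_s R(η^s) = Σ_ω μ_ω`.
-/

def mergePosterior (a b : ℝ) (x y : Fin n → ℝ) : Fin n → ℝ :=
  fun ω => (a * x ω + b * y ω) / (a + b)

theorem smul_mergePosterior {a b : ℝ} (hab : a + b ≠ 0) (x y : Fin n → ℝ) :
    (a + b) • mergePosterior a b x y = a • x + b • y := by
  ext ω
  simp only [mergePosterior, Pi.smul_apply, Pi.add_apply, smul_eq_mul]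
  field_simp

theorem le_one_of_mem_simplex {η : Fin n → ℝ} (hη : η ∈ simplex n) (ω : Fin n) : η ω ≤ 1 :=
  hη.2 ▸ single_le_sum (fun ω' _ => hη.1 ω') (mem_univ ω)

theorem mergePosterior_mem_simplex {a b : ℝ} (ha : 0 < a) (hb : 0 < b) {x y : Fin n → ℝ}
    (hx : x ∈ simplex n) (hy : y ∈ simplex n) : mergePosterior a b x y ∈ simplex n := by
  refine ⟨fun ω => div_nonneg (by nlinarith [hx.1 ω, hy.1 ω]) (by positivity), ?_⟩
  simp only [mergePosterior, ← sum_div, sum_add_distrib, ← mul_sum, hx.2, hy.2]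
  field_simp

section Ratio

variable (μ θ : Fin n → ℝ)

theorem ratio_add (x y : Fin n → ℝ) : Ratio μ θ (x + y) = Ratio μ θ x + Ratio μ θ y := by
  simp only [Ratio, Pi.add_apply, mul_add, add_div, sum_add_distrib]

theorem ratio_smul (c : ℝ) (x : Fin n → ℝ) : Ratio μ θ (c • x) = c * Ratio μ θ x := by
  simp only [Ratio, Pi.smul_apply, smul_eq_mul, mul_sum]
  exact sum_congr rfl fun ω _ => by ring

theorem ratio_nonneg {μ θ η : Fin n → ℝ} (hμ : ∀ ω, 0 ≤ μ ω) (hθ : ∀ ω, 0 ≤ θ ω)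
    (hη : ∀ ω, 0 ≤ η ω) : 0 ≤ Ratio μ θ η :=
  sum_nonneg fun ω _ => div_nonneg (mul_nonneg (hμ ω) (hη ω)) (hθ ω)

theorem add_mul_ratio_mergePosterior {a b : ℝ} (hab : a + b ≠ 0) (x y : Fin n → ℝ) :
    (a + b) * Ratio μ θ (mergePosterior a b x y) = a * Ratio μ θ x + b * Ratio μ θ y := by
  rw [← ratio_smul, smul_mergePosterior hab, ratio_add, ratio_smul, ratio_smul]

theorem sum_mul_ratio_eq {m : ℕ} {φ : Fin m → ℝ} {η : Fin m → Fin n → ℝ} {θ : Fin n → ℝ}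
    (hθ : ∀ ω, θ ω ≠ 0) (hsplit : ∀ ω, ∑ s, φ s * η s ω = θ ω) :
    ∑ s, φ s * Ratio μ θ (η s) = ∑ ω, μ ω :=
  calc ∑ s, φ s * Ratio μ θ (η s) = ∑ ω, μ ω / θ ω * ∑ s, φ s * η s ω := by
        simp only [Ratio, mul_sum]
        rw [sum_comm]
        exact sum_congr rfl fun ω _ => sum_congr rfl fun s _ => by ring
    _ = ∑ ω, μ ω := sum_congr rfl fun ω _ => by rw [hsplit, div_mul_cancel₀ _ (hθ ω)]

end Ratio

section Cost

variable (u : Fin n → A → ℝ)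

theorem cost_add_le (x y : Fin n → ℝ) : Cost u x + Cost u y ≤ Cost u (x + y) := by
  have hsup : univ.sup' univ_nonempty (fun a => ∑ ω, (x + y) ω * u ω a) ≤
      univ.sup' univ_nonempty (fun a => ∑ ω, x ω * u ω a) +
        univ.sup' univ_nonempty (fun a => ∑ ω, y ω * u ω a) :=
    sup'_le _ _ fun a ha => by
      simpa only [Pi.add_apply, add_mul, sum_add_distrib] using
        add_le_add (le_sup' (fun a => ∑ ω, x ω * u ω a) ha) (le_sup' (fun a => ∑ ω, y ω * u ω a) ha)
  simp only [Cost, Pi.add_apply, add_mul, sum_add_distrib] at hsup ⊢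
  linarith

theorem cost_smul {c : ℝ} (hc : 0 ≤ c) (x : Fin n → ℝ) : Cost u (c • x) = c * Cost u x := by
  simp only [Cost, Pi.smul_apply, smul_eq_mul, mul_assoc, ← mul_sum, ← mul₀_sup' hc, mul_sub]

theorem add_mul_cost_le_mergePosterior {a b : ℝ} (ha : 0 < a) (hb : 0 < b) (x y : Fin n → ℝ) :
    a * Cost u x + b * Cost u y ≤ (a + b) * Cost u (mergePosterior a b x y) := by
  rw [← cost_smul u ha.le, ← cost_smul u hb.le, ← cost_smul u (by positivity),
    smul_mergePosterior (by positivity)]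
  exact cost_add_le u _ _

theorem cost_le_sum_sub {η : Fin n → ℝ} (hη : η ∈ simplex n) (a : A) :
    Cost u η ≤ ∑ ω, (uStar u ω - u ω a) :=
  calc Cost u η ≤ ∑ ω, η ω * (uStar u ω - u ω a) := by
        have := le_sup' (fun a => ∑ ω, η ω * u ω a) (mem_univ a)
        simp only [Cost, mul_sub, sum_sub_distrib]
        linarith
    _ ≤ ∑ ω, (uStar u ω - u ω a) := sum_le_sum fun ω _ =>
        mul_le_of_le_one_left (sub_nonneg.2 (le_sup' (u ω) (mem_univ a)))
          (le_one_of_mem_simplex hη ω)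

end Cost

theorem neg_mul_le_merge_gain {a b Rs Rt Rv Cs Ct Cv : ℝ} (hab : 0 < a + b)
    (hR : (a + b) * Rv = a * Rs + b * Rt) (hRv : 0 ≤ Rv) (hC : a * Cs + b * Ct ≤ (a + b) * Cv) :
    -(a * b / (a + b)) * ((Rs - Rt) * (Cs - Ct)) ≤
      (a + b) * Rv * Cv - a * Rs * Cs - b * Rt * Ct := by
  have hRv' : Rv = (a * Rs + b * Rt) / (a + b) := by field_simp; linarith
  have hgain : -(a * b / (a + b)) * ((Rs - Rt) * (Cs - Ct)) =
      Rv * (a * Cs + b * Ct) - a * Rs * Cs - b * Rt * Ct := by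
    rw [hRv']; field_simp; ring
  nlinarith [mul_le_mul_of_nonneg_left hC hRv]

theorem neg_mul_le_objective_merge_sub (u : Fin n → A → ℝ) {μ θ : Fin n → ℝ}
    (hμ : ∀ ω, 0 ≤ μ ω) (hθ : ∀ ω, 0 ≤ θ ω) {a b : ℝ} (ha : 0 < a) (hb : 0 < b)
    {x y : Fin n → ℝ} (hx : x ∈ simplex n) (hy : y ∈ simplex n) :
    -(a * b / (a + b)) * ((Ratio μ θ x - Ratio μ θ y) * (Cost u x - Cost u y)) ≤
      (a + b) * Ratio μ θ (mergePosterior a b x y) * Cost u (mergePosterior a b x y)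
        - a * Ratio μ θ x * Cost u x - b * Ratio μ θ y * Cost u y :=
  neg_mul_le_merge_gain (by positivity) (add_mul_ratio_mergePosterior μ θ (by positivity) x y)
    (ratio_nonneg hμ hθ (mergePosterior_mem_simplex ha hb hx hy).1)
    (add_mul_cost_le_mergePosterior u ha hb x y)

theorem objective_lt_merge (u : Fin n → A → ℝ) {μ θ : Fin n → ℝ}
    (hμ : ∀ ω, 0 ≤ μ ω) (hθ : ∀ ω, 0 ≤ θ ω) {a b : ℝ} (ha : 0 < a) (hb : 0 < b)
    {x y : Fin n → ℝ} (hx : x ∈ simplex n) (hy : y ∈ simplex n)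
    (hslope : (Ratio μ θ x - Ratio μ θ y) * (Cost u x - Cost u y) < 0) :
    a * Ratio μ θ x * Cost u x + b * Ratio μ θ y * Cost u y <
      (a + b) * Ratio μ θ (mergePosterior a b x y) * Cost u (mergePosterior a b x y) := by
  have hw : 0 < a * b / (a + b) := by positivity
  nlinarith [neg_mul_le_objective_merge_sub u hμ hθ ha hb hx hy]

theorem concaveSet_bddAbove (u : Fin n → A → ℝ) {μ θ : Fin n → ℝ}
    (hμ : ∀ ω, 0 ≤ μ ω) (hθ : ∀ ω, 0 < θ ω) : BddAbove (ConcaveSet u μ θ) := by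
  set K := ∑ ω, (uStar u ω - u ω (Classical.arbitrary A))
  refine ⟨K * ∑ ω, μ ω, ?_⟩
  rintro _ ⟨m, φ, η, hφ, hη, hsplit, rfl⟩
  calc ∑ s, φ s * Ratio μ θ (η s) * Cost u (η s) ≤ ∑ s, φ s * Ratio μ θ (η s) * K :=
        sum_le_sum fun s _ => mul_le_mul_of_nonneg_left (cost_le_sum_sub u (hη s) _)
          (mul_nonneg (hφ s) (ratio_nonneg hμ (fun ω => (hθ ω).le) (hη s).1))
    _ = K * ∑ ω, μ ω := by
        rw [← sum_mul, sum_mul_ratio_eq μ (fun ω => (hθ ω).ne') hsplit, mul_comm]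

theorem sum_update_update_mul {ι X : Type*} [Fintype ι] [DecidableEq ι] (φ : ι → ℝ) (η : ι → X)
    (G : X → ℝ) {s t : ι} (hst : s ≠ t) (c : ℝ) (x : X) :
    ∑ i, Function.update (Function.update φ s c) t 0 i * G (Function.update η s x i)
        + φ s * G (η s) + φ t * G (η t) = ∑ i, φ i * G (η i) + c * G x := by
  have hsplit : ∀ f : ι → ℝ, ∑ i, f i = f s + f t + ∑ i ∈ (univ.erase s).erase t, f i := fun f => by
    rw [← add_sum_erase _ _ (mem_univ s), ← add_sum_erase _ _ (mem_erase.2 ⟨hst.symm, mem_univ t⟩),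
      add_assoc]
  rw [hsplit, hsplit (fun i => φ i * G (η i))]
  have hrest : ∑ i ∈ (univ.erase s).erase t,
      Function.update (Function.update φ s c) t 0 i * G (Function.update η s x i) =
      ∑ i ∈ (univ.erase s).erase t, φ i * G (η i) :=
    sum_congr rfl fun i hi => by
      obtain ⟨hit, his, -⟩ := by simpa only [mem_erase] using hi
      simp only [Function.update_of_ne hit, Function.update_of_ne his]
  simp only [hrest, Function.update_self, Function.update_of_ne hst, Function.update_of_ne hst.symm]
  ring

theorem exists_mem_concaveSet_gt (u : Fin n → A → ℝ) {μ θ : Fin n → ℝ}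
    (hμ : ∀ ω, 0 ≤ μ ω) (hθ : ∀ ω, 0 ≤ θ ω) {m : ℕ} {φ : Fin m → ℝ} {η : Fin m → Fin n → ℝ}
    (hφ : ∀ s, 0 ≤ φ s) (hη : ∀ s, η s ∈ simplex n) (hsplit : ∀ ω, ∑ s, φ s * η s ω = θ ω)
    {s t : Fin m} (hst : s ≠ t) (hs : 0 < φ s) (ht : 0 < φ t)
    (hslope : (Ratio μ θ (η s) - Ratio μ θ (η t)) * (Cost u (η s) - Cost u (η t)) < 0) :
    ∃ v ∈ ConcaveSet u μ θ, ∑ i, φ i * Ratio μ θ (η i) * Cost u (η i) < v := by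
  set ηv := mergePosterior (φ s) (φ t) (η s) (η t)
  have hηv : (φ s + φ t) • ηv = φ s • η s + φ t • η t := smul_mergePosterior (by positivity) _ _
  refine ⟨_, ⟨m, Function.update (Function.update φ s (φ s + φ t)) t 0,
    Function.update η s ηv, fun i => ?_, fun i => ?_, fun ω => ?_, rfl⟩, ?_⟩
  · simp only [Function.update_apply]
    split_ifs
    exacts [le_rfl, by positivity, hφ i]
  · simp only [Function.update_apply]
    split_ifs
    exacts [mergePosterior_mem_simplex hs ht (hη s) (hη t), hη i]
  · have := sum_update_update_mul φ η (fun x => x ω) hst (φ s + φ t) ηv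
    have hω := congrFun hηv ω
    simp only [Pi.smul_apply, Pi.add_apply, smul_eq_mul] at hω
    linarith [hsplit ω]
  · have := sum_update_update_mul φ η (fun x => Ratio μ θ x * Cost u x) hst (φ s + φ t) ηv
    have := objective_lt_merge u hμ hθ hs ht (hη s) (hη t) hslope
    simp only [mul_assoc] at *
    linarith

theorem stmt5_general (u : Fin n → A → ℝ)
    (μ θ : Fin n → ℝ) (hμ : μ ∈ simplex n)
    (hθpos : ∀ ω, 0 < θ ω)
    (φs φt : ℝ) (hφs : 0 < φs) (hφt : 0 < φt)
    (ηs ηt : Fin n → ℝ) (hηs : ηs ∈ simplex n) (hηt : ηt ∈ simplex n) :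
    (-(φs * φt / (φs + φt)) *
        ((Ratio μ θ ηs - Ratio μ θ ηt) * (Cost u ηs - Cost u ηt)) ≤
      (φs + φt) *
          Ratio μ θ (fun ω => (φs * ηs ω + φt * ηt ω) / (φs + φt)) *
          Cost u (fun ω => (φs * ηs ω + φt * ηt ω) / (φs + φt))
        - φs * Ratio μ θ ηs * Cost u ηs - φt * Ratio μ θ ηt * Cost u ηt) ∧
    ((Ratio μ θ ηs - Ratio μ θ ηt) * (Cost u ηs - Cost u ηt) < 0 →
      φs * Ratio μ θ ηs * Cost u ηs + φt * Ratio μ θ ηt * Cost u ηt <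
        (φs + φt) *
          Ratio μ θ (fun ω => (φs * ηs ω + φt * ηt ω) / (φs + φt)) *
          Cost u (fun ω => (φs * ηs ω + φt * ηt ω) / (φs + φt))) ∧
    (∀ (m : ℕ) (φ : Fin m → ℝ) (η : Fin m → Fin n → ℝ),
      (∀ s, 0 ≤ φ s) → (∀ s, η s ∈ simplex n) →
      (∀ ω, ∑ s, φ s * η s ω = θ ω) →
      (∑ s, φ s * Ratio μ θ (η s) * Cost u (η s)) = sSup (ConcaveSet u μ θ) →
      ∀ s t : Fin m, s ≠ t → 0 < φ s → 0 < φ t →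
        ¬ (Ratio μ θ (η s) - Ratio μ θ (η t)) *
            (Cost u (η s) - Cost u (η t)) < 0) := by
  have hθ : ∀ ω, 0 ≤ θ ω := fun ω => (hθpos ω).le
  refine ⟨neg_mul_le_objective_merge_sub u hμ.1 hθ hφs hφt hηs hηt,
    objective_lt_merge u hμ.1 hθ hφs hφt hηs hηt, ?_⟩
  intro m φ η hφ hη hsplit hmax s t hst hs ht hslope
  obtain ⟨v, hv, hlt⟩ := exists_mem_concaveSet_gt u hμ.1 hθ hφ hη hsplit hst hs ht hslope
  exact (hmax ▸ hlt).not_ge (le_csSup (concaveSet_bddAbove u hμ.1 hθpos) hv)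

/-- merging two signals changes the objective by at least
`−(φ_s φ_t / φ_v)·(R(η^s) − R(η^t))·(C(η^s) − C(η^t))`; in particular, merging two
signals whose `(R, C)` pairs lie along a negative slope strictly increases the
objective, so no feasible family attaining the supremum of the single-type problem
contains two positively weighted posteriors with that negative-slope condition. -/
theorem stmt5 (hn : 1 ≤ n) (u : Fin n → A → ℝ)
    (μ θ : Fin n → ℝ) (hμ : μ ∈ simplex n) (hθ : θ ∈ simplex n)
    (hθpos : ∀ ω, 0 < θ ω)
    (φs φt : ℝ) (hφs : 0 < φs) (hφt : 0 < φt)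
    (ηs ηt : Fin n → ℝ) (hηs : ηs ∈ simplex n) (hηt : ηt ∈ simplex n) :
    (-(φs * φt / (φs + φt)) *
        ((Ratio μ θ ηs - Ratio μ θ ηt) * (Cost u ηs - Cost u ηt)) ≤
      (φs + φt) *
          Ratio μ θ (fun ω => (φs * ηs ω + φt * ηt ω) / (φs + φt)) *
          Cost u (fun ω => (φs * ηs ω + φt * ηt ω) / (φs + φt))
        - φs * Ratio μ θ ηs * Cost u ηs - φt * Ratio μ θ ηt * Cost u ηt) ∧
    ((Ratio μ θ ηs - Ratio μ θ ηt) * (Cost u ηs - Cost u ηt) < 0 →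
      φs * Ratio μ θ ηs * Cost u ηs + φt * Ratio μ θ ηt * Cost u ηt <
        (φs + φt) *
          Ratio μ θ (fun ω => (φs * ηs ω + φt * ηt ω) / (φs + φt)) *
          Cost u (fun ω => (φs * ηs ω + φt * ηt ω) / (φs + φt))) ∧
    (∀ (m : ℕ) (φ : Fin m → ℝ) (η : Fin m → Fin n → ℝ),
      (∀ s, 0 ≤ φ s) → (∀ s, η s ∈ simplex n) →
      (∀ ω, ∑ s, φ s * η s ω = θ ω) →
      (∑ s, φ s * Ratio μ θ (η s) * Cost u (η s)) = sSup (ConcaveSet u μ θ) →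
      ∀ s t : Fin m, s ≠ t → 0 < φ s → 0 < φ t →
        ¬ (Ratio μ θ (η s) - Ratio μ θ (η t)) *
            (Cost u (η s) - Cost u (η t)) < 0) :=
  stmt5_general u μ θ hμ hθpos φs φt hφs hφt ηs ηt hηs hηt

end
end

section
/- Suppose θ = μ. Then there exists a feasible family (S, (φ_s), (η^s)) attaining the supremum of the single-type problem (which equals C(μ)) with |S| ≤ n such that every posterior η^s has at most |A| nonzero coordinates, i.e., ‖η^s‖₀ ≤ |A| for all s ∈ S. -/
open Finset
open scoped Classical

noncomputable section

variable {n : ℕ} {A : Type*} [Fintype A] [Nonempty A]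

/-!
With `θ = μ` the likelihood ratio is identically `1` on the simplex, so the objective is
`Σ φ_s C(η^s)`. Fix an action `a₀` optimal at `θ`. The cost `C` lies below the linear function
`η ↦ Σ_ω η_ω (u*(ω) - u(ω, a₀))`, with equality exactly where `a₀` is optimal, and that linear
function takes the value `C(θ)` on every splitting of `θ`. Hence the supremum is `C(θ)`, attained
by any splitting of `θ` into posteriors at which `a₀` stays optimal.

The posteriors at which `a₀` is optimal form a polytope. If a point of it has more than `|A|`
nonzero coordinates, the `|A|` linear conditions "coordinates sum to `0`" and "all actions
gain equally" leave a nonzero direction supported on those coordinates; moving both ways along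
it until a coordinate vanishes writes the point as a convex combination of two points of smaller
support. So `θ` lies in the convex hull of the sparse points of the polytope, and Carathéodory's
theorem gives an affinely independent combination. Points on the hyperplane `Σ_ω η_ω = 1` that
are affinely independent are linearly independent, so at most `n` of them are needed.
-/

open Matrix

theorem AffineIndependent.linearIndependent_of_apply_eq_one {k V ι : Type*} [Ring k]
    [AddCommGroup V] [Module k V] {p : ι → V} (hp : AffineIndependent k p) (f : V →ₗ[k] k)
    (hf : ∀ i, f (p i) = 1) : LinearIndependent k p :=
  linearIndependent_iff'.2 fun s g hg =>
    hp.eq_zero_of_sum_eq_zero (by simpa [map_sum, hf] using congrArg f hg) hg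

theorem AffineIndependent.card_le_of_sum_eq_one {ι Ω : Type*} [Fintype ι] [Fintype Ω]
    {p : ι → Ω → ℝ} (hp : AffineIndependent ℝ p) (h : ∀ i, ∑ ω, p i ω = 1) :
    Fintype.card ι ≤ Fintype.card Ω := by
  simpa using (hp.linearIndependent_of_apply_eq_one (∑ ω, LinearMap.proj ω)
    (by simpa using h)).fintype_card_le_finrank

theorem sum_smul_eq_iff {ι Ω : Type*} [Fintype ι] (φ : ι → ℝ) (η : ι → Ω → ℝ) (x : Ω → ℝ) :
    ∑ s, φ s • η s = x ↔ ∀ ω, ∑ s, φ s * η s ω = x ω := by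
  simp [funext_iff, Finset.sum_apply]

section OptimalRegion

variable {Ω α : Type*} [Fintype Ω]

def optimalRegion (u : Matrix Ω α ℝ) (a₀ : α) : Set (Ω → ℝ) :=
  {x | x ∈ stdSimplex ℝ Ω ∧ ∀ a, (x ᵥ* u) a ≤ (x ᵥ* u) a₀}

theorem exists_mem_optimalRegion [Fintype α] [Nonempty α] (u : Matrix Ω α ℝ) {x : Ω → ℝ}
    (hx : x ∈ stdSimplex ℝ Ω) : ∃ a₀, x ∈ optimalRegion u a₀ := by
  obtain ⟨a₀, -, h⟩ := exists_max_image univ (x ᵥ* u) univ_nonempty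
  exact ⟨a₀, hx, fun a => h a (mem_univ a)⟩

theorem exists_ne_zero_sum_eq_zero_vecMul_eq [Fintype α] (u : Matrix Ω α ℝ) (a₀ : α)
    {T : Finset Ω} (hT : Fintype.card α < #T) :
    ∃ d : Ω → ℝ, d ≠ 0 ∧ (∀ ω ∉ T, d ω = 0) ∧ ∑ ω, d ω = 0 ∧
      ∀ a, (d ᵥ* u) a = (d ᵥ* u) a₀ := by
  -- The `a₀` coordinate of `v ω` encodes the constraint `∑ d = 0`, the others the payoff gaps.
  set v : T → α → ℝ := fun ω => Function.update (fun a => u ω a - u ω a₀) a₀ 1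
  have hdep : ¬ LinearIndependent ℝ v := fun h => by
    simpa [hT.not_ge] using h.fintype_card_le_finrank
  obtain ⟨g, hg, i, hi⟩ := Fintype.not_linearIndependent_iff.mp hdep
  have hg' : ∀ a, ∑ ω : T, g ω * v ω a = 0 := fun a => by simpa using congrFun hg a
  set d : Ω → ℝ := Subtype.val.extend g 0
  have hd_out : ∀ ω ∉ T, d ω = 0 := fun ω hω =>
    Function.extend_apply' _ _ _ (by rintro ⟨j, rfl⟩; exact hω j.2)
  have hd_sum : ∀ h : Ω → ℝ, ∑ ω, d ω * h ω = ∑ ω : T, g ω * h ω := fun h => by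
    rw [← Finset.sum_subset (subset_univ T) fun ω _ hω => by rw [hd_out ω hω, zero_mul],
      ← Finset.sum_coe_sort T]
    simp only [d, Subtype.val_injective.extend_apply]
  refine ⟨d, fun h => hi ?_, hd_out, ?_, fun a => ?_⟩
  · simpa [d, Subtype.val_injective.extend_apply] using congrFun h i
  · simpa using (hd_sum fun _ => 1).trans (by simpa [v] using hg' a₀)
  · rcases eq_or_ne a a₀ with rfl | ha
    · rfl
    have := hg' a
    simp only [v, Function.update_of_ne ha, mul_sub, sum_sub_distrib] at this
    simp only [vecMul, dotProduct, hd_sum]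
    linarith

theorem exists_sub_smul_mem_optimalRegion {u : Matrix Ω α ℝ} {a₀ : α} {x d : Ω → ℝ}
    (hx : x ∈ optimalRegion u a₀) (hdx : ∀ ω, x ω = 0 → d ω = 0) (hd : ∑ ω, d ω = 0)
    (hdu : ∀ a, (d ᵥ* u) a = (d ᵥ* u) a₀) (hpos : ∃ ω, 0 < d ω) :
    ∃ t : ℝ, 0 < t ∧ x - t • d ∈ optimalRegion u a₀ ∧
      univ.filter (fun ω => (x - t • d) ω ≠ 0) ⊂ univ.filter (fun ω => x ω ≠ 0) := by
  obtain ⟨ω₁, hω₁, hmin⟩ := exists_min_image (univ.filter (0 < d ·)) (fun ω => x ω / d ω)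
    (by simpa [Finset.filter_nonempty_iff] using hpos)
  have hd₁ : 0 < d ω₁ := (mem_filter.mp hω₁).2
  have hx₁ : 0 < x ω₁ := (hx.1.1 ω₁).lt_of_ne fun h => hd₁.ne' (hdx ω₁ h.symm)
  set t := x ω₁ / d ω₁
  have ht : 0 < t := div_pos hx₁ hd₁
  have hle : ∀ ω, t * d ω ≤ x ω := fun ω => by
    rcases lt_or_ge 0 (d ω) with h | h
    · exact (le_div_iff₀ h).mp (hmin ω (by simp [h]))
    · exact (mul_nonpos_of_nonneg_of_nonpos ht.le h).trans (hx.1.1 ω)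
  refine ⟨t, ht, ⟨⟨fun ω => ?_, ?_⟩, fun a => ?_⟩, ?_⟩
  · simpa using hle ω
  · simp [sum_sub_distrib, ← mul_sum, hd, hx.1.2]
  · rw [sub_vecMul, smul_vecMul]
    simpa [hdu a] using hx.2 a
  · refine (ssubset_iff_of_subset fun ω => ?_).mpr ⟨ω₁, by simpa using hx₁.ne', ?_⟩
    · simp only [mem_filter, mem_univ, true_and]
      exact mt fun h => by simp [h, hdx ω h]
    · simp [t, hd₁.ne']

theorem optimalRegion_subset_convexHull [Fintype α] (u : Matrix Ω α ℝ) (a₀ : α) :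
    optimalRegion u a₀ ⊆
      convexHull ℝ {y ∈ optimalRegion u a₀ | #(univ.filter (y · ≠ 0)) ≤ Fintype.card α} := by
  intro x hx
  induction hk : #(univ.filter (x · ≠ 0)) using Nat.strong_induction_on generalizing x with
  | _ k ih =>
  by_cases hsmall : k ≤ Fintype.card α
  · exact subset_convexHull ℝ _ ⟨hx, hk ▸ hsmall⟩
  obtain ⟨d, hd0, hd_supp, hd_sum, hdu⟩ :=
    exists_ne_zero_sum_eq_zero_vecMul_eq u a₀ (T := univ.filter (x · ≠ 0)) (by omega)
  have hdx : ∀ ω, x ω = 0 → d ω = 0 := fun ω h => hd_supp ω (by simp [h])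
  have hd_neg_sum : ∑ ω, (-d) ω = 0 := by simp [hd_sum]
  obtain ⟨ω, hω⟩ : ∃ ω, d ω ≠ 0 := Function.ne_iff.mp hd0
  obtain ⟨ωp, -, hωp⟩ := exists_pos_of_sum_zero_of_exists_nonzero d hd_sum ⟨ω, mem_univ ω, hω⟩
  obtain ⟨ωn, -, hωn⟩ := exists_pos_of_sum_zero_of_exists_nonzero (-d) hd_neg_sum
    ⟨ω, mem_univ ω, neg_ne_zero.mpr hω⟩
  obtain ⟨t, ht, hxt, hsub_t⟩ :=
    exists_sub_smul_mem_optimalRegion hx hdx hd_sum hdu ⟨ωp, hωp⟩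
  obtain ⟨s, hs, hxs, hsub_s⟩ := exists_sub_smul_mem_optimalRegion hx
    (fun ω h => by simp [hdx ω h]) hd_neg_sum (fun a => by simp [neg_vecMul, hdu a]) ⟨ωn, hωn⟩
  have hx_eq : x = (s / (s + t)) • (x - t • d) + (t / (s + t)) • (x - s • -d) := by
    ext ω
    simp only [Pi.add_apply, Pi.smul_apply, Pi.sub_apply, Pi.neg_apply, smul_eq_mul]
    field_simp
    ring
  rw [hx_eq]
  exact convex_convexHull ℝ _ (ih _ (hk ▸ card_lt_card hsub_t) hxt rfl)
    (ih _ (hk ▸ card_lt_card hsub_s) hxs rfl) (by positivity) (by positivity) (by field_simp)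

theorem exists_sparse_decomposition [Fintype α] (u : Matrix Ω α ℝ) {a₀ : α} {x : Ω → ℝ}
    (hx : x ∈ optimalRegion u a₀) :
    ∃ (m : ℕ) (φ : Fin m → ℝ) (η : Fin m → Ω → ℝ), m ≤ Fintype.card Ω ∧ (∀ s, 0 ≤ φ s) ∧
      (∀ s, η s ∈ optimalRegion u a₀) ∧ ∑ s, φ s • η s = x ∧
      ∀ s, #(univ.filter (η s · ≠ 0)) ≤ Fintype.card α := by
  obtain ⟨ι, _, z, w, hz, hind, hw, -, rfl⟩ :=
    eq_pos_convex_span_of_mem_convexHull (optimalRegion_subset_convexHull u a₀ hx)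
  have hz' : ∀ i, z i ∈ optimalRegion u a₀ ∧ #(univ.filter (z i · ≠ 0)) ≤ Fintype.card α :=
    fun i => hz (Set.mem_range_self i)
  let e := Fintype.equivFin ι
  exact ⟨_, w ∘ e.symm, z ∘ e.symm, hind.card_le_of_sum_eq_one fun i => (hz' i).1.1.2,
    fun s => (hw _).le, fun s => (hz' _).1, e.symm.sum_comp (fun i => w i • z i),
    fun s => (hz' _).2⟩

end OptimalRegion

theorem ratio_self {θ η : Fin n → ℝ} (hθ : ∀ ω, 0 < θ ω) (hη : ∑ ω, η ω = 1) :
    Ratio θ θ η = 1 := by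
  simp [Ratio, mul_div_cancel_left₀ _ (hθ _).ne', hη]

section SingleType

variable (u : Fin n → A → ℝ)

def regret (a : A) (η : Fin n → ℝ) : ℝ :=
  η ⬝ᵥ fun ω => uStar u ω - u ω a

theorem regret_eq (a : A) (η : Fin n → ℝ) :
    regret u a η = ∑ ω, η ω * uStar u ω - ∑ ω, η ω * u ω a := by
  simp [regret, dotProduct, mul_sub, sum_sub_distrib]

theorem cost_le_regret (a : A) (η : Fin n → ℝ) : Cost u η ≤ regret u a η := by
  rw [Cost, regret_eq]
  exact sub_le_sub_left (le_sup' (fun b => ∑ ω, η ω * u ω b) (mem_univ a)) _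

theorem cost_eq_regret {a : A} {η : Fin n → ℝ}
    (h : ∀ b, ∑ ω, η ω * u ω b ≤ ∑ ω, η ω * u ω a) : Cost u η = regret u a η := by
  rw [Cost, regret_eq, le_antisymm (sup'_le _ _ fun b _ => h b)
    (le_sup' (fun b => ∑ ω, η ω * u ω b) (mem_univ a))]

theorem sum_mul_regret {m : ℕ} (φ : Fin m → ℝ) (η : Fin m → Fin n → ℝ) (a : A) :
    ∑ s, φ s * regret u a (η s) = regret u a (∑ s, φ s • η s) := by
  simp [regret, sum_dotProduct, smul_dotProduct]

theorem sum_mul_cost_le_regret {m : ℕ} {φ : Fin m → ℝ} (hφ : ∀ s, 0 ≤ φ s)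
    (η : Fin m → Fin n → ℝ) (a : A) :
    ∑ s, φ s * Cost u (η s) ≤ regret u a (∑ s, φ s • η s) :=
  (sum_le_sum fun s _ => mul_le_mul_of_nonneg_left (cost_le_regret u a (η s)) (hφ s)).trans_eq
    (sum_mul_regret u φ η a)

theorem sum_mul_cost_eq_regret {m : ℕ} (φ : Fin m → ℝ) {η : Fin m → Fin n → ℝ} {a : A}
    (h : ∀ s b, ∑ ω, η s ω * u ω b ≤ ∑ ω, η s ω * u ω a) :
    ∑ s, φ s * Cost u (η s) = regret u a (∑ s, φ s • η s) := by
  simp_rw [cost_eq_regret u (h _), sum_mul_regret]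

theorem sum_mul_ratio_self_mul_cost {m : ℕ} (φ : Fin m → ℝ)
    {θ : Fin n → ℝ} (hθ : ∀ ω, 0 < θ ω) {η : Fin m → Fin n → ℝ} (hη : ∀ s, η s ∈ simplex n) :
    ∑ s, φ s * Ratio θ θ (η s) * Cost u (η s) = ∑ s, φ s * Cost u (η s) := by
  simp [ratio_self hθ (hη _).2]

theorem isGreatest_concaveSet_self {θ : Fin n → ℝ} (hθ : θ ∈ simplex n)
    (hθpos : ∀ ω, 0 < θ ω) : IsGreatest (ConcaveSet u θ θ) (Cost u θ) := by
  obtain ⟨a₀, -, ha₀⟩ := exists_mem_optimalRegion u hθ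
  refine ⟨⟨1, 1, fun _ => θ, fun _ => zero_le_one, fun _ => hθ, by simp, ?_⟩, ?_⟩
  · simp [ratio_self hθpos hθ.2]
  rintro v ⟨m, φ, η, hφ, hη, hmarg, rfl⟩
  rw [sum_mul_ratio_self_mul_cost u φ hθpos hη, cost_eq_regret u ha₀,
    ← (sum_smul_eq_iff φ η θ).2 hmarg]
  exact sum_mul_cost_le_regret u hφ η a₀

end SingleType

theorem stmt13_general (u : Fin n → A → ℝ)
    (μ θ : Fin n → ℝ) (hθ : θ ∈ simplex n)
    (hθpos : ∀ ω, 0 < θ ω) (hθμ : θ = μ) :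
    sSup (ConcaveSet u μ θ) = Cost u μ ∧
    ∃ (m : ℕ) (φ : Fin m → ℝ) (η : Fin m → Fin n → ℝ),
      m ≤ n ∧
      (∀ s, 0 ≤ φ s) ∧ (∀ s, η s ∈ simplex n) ∧
      (∀ ω, ∑ s, φ s * η s ω = θ ω) ∧
      (∑ s, φ s * Ratio μ θ (η s) * Cost u (η s)) = sSup (ConcaveSet u μ θ) ∧
      (∀ s, (Finset.univ.filter (fun ω => η s ω ≠ 0)).card ≤ Fintype.card A) := by
  subst hθμ
  have hsup := (isGreatest_concaveSet_self u hθ hθpos).csSup_eq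
  obtain ⟨a₀, hθa₀⟩ := exists_mem_optimalRegion u hθ
  obtain ⟨m, φ, η, hm, hφ, hη, hsum, hsparse⟩ := exists_sparse_decomposition u hθa₀
  refine ⟨hsup, m, φ, η, by simpa using hm, hφ, fun s => (hη s).1,
    (sum_smul_eq_iff φ η θ).1 hsum, ?_, hsparse⟩
  rw [hsup, sum_mul_ratio_self_mul_cost u φ hθpos fun s => (hη s).1,
    sum_mul_cost_eq_regret u φ fun s => (hη s).2, hsum, cost_eq_regret u hθa₀.2]

/-- when `θ = μ`, there is a feasible family attaining the supremum of
the single-type problem (which equals `C(μ)`) with at most `n` signals in which every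
posterior has at most `|A|` nonzero coordinates. -/
theorem stmt13 (hn : 1 ≤ n) (u : Fin n → A → ℝ)
    (μ θ : Fin n → ℝ) (hμ : μ ∈ simplex n) (hθ : θ ∈ simplex n)
    (hθpos : ∀ ω, 0 < θ ω) (hθμ : θ = μ) :
    sSup (ConcaveSet u μ θ) = Cost u μ ∧
    ∃ (m : ℕ) (φ : Fin m → ℝ) (η : Fin m → Fin n → ℝ),
      m ≤ n ∧
      (∀ s, 0 ≤ φ s) ∧ (∀ s, η s ∈ simplex n) ∧
      (∀ ω, ∑ s, φ s * η s ω = θ ω) ∧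
      (∑ s, φ s * Ratio μ θ (η s) * Cost u (η s)) = sSup (ConcaveSet u μ θ) ∧
      (∀ s, (Finset.univ.filter (fun ω => η s ω ≠ 0)).card ≤ Fintype.card A) :=
  stmt13_general u μ θ hθ hθpos hθμ

end
end

section
/- Fix a vector π ∈ [0,1]^n and a price p ∈ ℝ, and define the positively homogeneous extension Ĉ(x) = Σ_ω x_ω·u*(ω) − max_{a∈A} Σ_ω x_ω·u(ω,a) for x ∈ ℝ^n with x ≥ 0 (so that Ĉ(k·x) = k·Ĉ(x) for k ≥ 0 and Ĉ is concave). Then the set of buyer types willing to pay p after signal probabilities π, namely Λ = {θ ∈ Δ_n : Ĉ(θ₁π₁, …, θ_nπ_n) ≥ p·Σ_ω θ_ω·π_ω}, is a convex subset of Δ_n. -/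
open Finset
open scoped Classical

noncomputable section

variable {n : ℕ} {A : Type*} [Fintype A] [Nonempty A]

/-- The positively homogeneous extension of the cost of uncertainty:
`Ĉ(x) = Σ_ω x_ω u*(ω) − max_a Σ_ω x_ω u(ω,a)`. -/
def ChatCost (u : Fin n → A → ℝ) (x : Fin n → ℝ) : ℝ :=
  ∑ ω, x ω * uStar u ω
    - Finset.univ.sup' Finset.univ_nonempty (fun a => ∑ ω, x ω * u ω a)

theorem ConvexOn.finset_sup' {𝕜 E β ι : Type*} [Semiring 𝕜] [PartialOrder 𝕜] [AddCommMonoid E]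
    [LinearOrder β] [AddCommMonoid β] [IsOrderedAddMonoid β] [SMul 𝕜 E] [Module 𝕜 β]
    [PosSMulStrictMono 𝕜 β] {s : Set E} {t : Finset ι} (ht : t.Nonempty) {f : ι → E → β}
    (hf : ∀ i ∈ t, ConvexOn 𝕜 s (f i)) :
    ConvexOn 𝕜 s fun x => t.sup' ht fun i => f i x := by
  convert Finset.sup'_induction ht f (p := ConvexOn 𝕜 s) (fun _ hg _ hh => hg.sup hh) hf using 1
  exact funext fun x => (Finset.sup'_apply ht f x).symm

theorem ConcaveOn.convex_setOf_le {𝕜 E β : Type*} [Semiring 𝕜] [PartialOrder 𝕜]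
    [AddCommMonoid E] [AddCommGroup β] [PartialOrder β] [IsOrderedAddMonoid β] [SMul 𝕜 E]
    [Module 𝕜 β] [PosSMulMono 𝕜 β] {s : Set E} {f g : E → β} (hf : ConcaveOn 𝕜 s f)
    (hg : ConvexOn 𝕜 s g) :
    Convex 𝕜 {x ∈ s | g x ≤ f x} := by
  simpa only [Pi.sub_apply, sub_nonneg] using (hf.sub hg).convex_ge 0

theorem concaveOn_chatCost (u : Fin n → A → ℝ) : ConcaveOn ℝ Set.univ (ChatCost u) :=
  (((dotProductBilin ℝ ℝ).flip (uStar u)).concaveOn convex_univ).sub <|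
    ConvexOn.finset_sup' _ fun a _ =>
      ((dotProductBilin ℝ ℝ).flip (u · a)).convexOn convex_univ

theorem stmt16_general (u : Fin n → A → ℝ)
    (π : Fin n → ℝ) (p : ℝ) :
    Convex ℝ {θ : Fin n → ℝ | θ ∈ simplex n ∧
      p * ∑ ω, θ ω * π ω ≤ ChatCost u (fun ω => θ ω * π ω)} := by
  have hcost : ConcaveOn ℝ Set.univ fun θ : Fin n → ℝ => ChatCost u fun ω => θ ω * π ω :=
    (concaveOn_chatCost u).comp_linearMap (LinearMap.mulRight ℝ π)
  have hprice : ConvexOn ℝ Set.univ fun θ : Fin n → ℝ => p * ∑ ω, θ ω * π ω :=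
    (p • (dotProductBilin ℝ ℝ).flip π).convexOn convex_univ
  convert (convex_stdSimplex ℝ (Fin n)).inter (hcost.convex_setOf_le hprice) using 1
  ext θ
  simp [simplex, stdSimplex]

/-- the set of buyer types in the simplex willing to pay price `p` after
a signal with probabilities `π`, i.e.
`Λ = {θ ∈ Δ_n : Ĉ(θ₁π₁, …, θ_nπ_n) ≥ p·Σ_ω θ_ω π_ω}`, is convex. -/
theorem stmt16 (hn : 1 ≤ n) (u : Fin n → A → ℝ)
    (π : Fin n → ℝ) (hπ0 : ∀ ω, 0 ≤ π ω) (hπ1 : ∀ ω, π ω ≤ 1) (p : ℝ) :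
    Convex ℝ {θ : Fin n → ℝ | θ ∈ simplex n ∧
      p * ∑ ω, θ ω * π ω ≤ ChatCost u (fun ω => θ ω * π ω)} :=
  stmt16_general u π p

end
end
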